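/- arXiv:0909.3325 — 2 statements merged into one kernel-verified Lean document; each statement's English description precedes it below -/
import Mathlib

section
/- Let G be a finitely generated abelian group (written additively), let x ∈ G be an element of finite order n, and let c, d be positive integers. Then there exists an automorphism φ of G with φ(c·x) = d·x if and only if gcd(c, n) = gcd(d, n). -/
/-- Number-theoretic key lemma: if `gcd c n = gcd d n` then there is `s` coprime to any
nonzero multiple `M` of `n` with `s * c ≡ d [MOD n]`. -/
lemma aux_exists_coprime_mul (c d n M : ℕ) (hn : 0 < n) (hnM : n ∣ M) (hM : M ≠ 0)
    (h : Nat.gcd c n = Nat.gcd d n) :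
    ∃ s : ℕ, Nat.Coprime s M ∧ s * c ≡ d [MOD n] := by
  set g := Nat.gcd c n with hg
  have hgpos : 0 < g := Nat.gcd_pos_of_pos_right c hn
  set m := n / g with hm
  have hgn : g ∣ n := Nat.gcd_dvd_right c n
  have hgc : g ∣ c := Nat.gcd_dvd_left c n
  have hgd : g ∣ d := h ▸ Nat.gcd_dvd_left d n
  have hc' : Nat.Coprime (c / g) m := Nat.coprime_div_gcd_div_gcd (hg ▸ hgpos)
  have hd' : Nat.Coprime (d / g) m := by
    have := Nat.coprime_div_gcd_div_gcd (n := n) (m := d) (h ▸ hgpos)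
    rwa [← h] at this
  have hmM : m ∣ M := dvd_trans (Nat.div_dvd_of_dvd hgn) hnM
  haveI : NeZero M := ⟨hM⟩
  set u₁ : (ZMod m)ˣ := ZMod.unitOfCoprime _ hc' with hu₁
  set u₂ : (ZMod m)ˣ := ZMod.unitOfCoprime _ hd' with hu₂
  obtain ⟨w, hw⟩ := ZMod.unitsMap_surjective hmM (u₂ * u₁⁻¹)
  set s := (w : ZMod M).val with hs
  refine ⟨s, ZMod.val_coe_unit_coprime w, ?_⟩
  have hcast : ((s : ZMod m)) = ((u₂ * u₁⁻¹ : (ZMod m)ˣ) : ZMod m) := by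
    have h5 : ((ZMod.unitsMap hmM w : (ZMod m)ˣ) : ZMod m)
        = ((u₂ * u₁⁻¹ : (ZMod m)ˣ) : ZMod m) := by rw [hw]
    rw [ZMod.unitsMap_def] at h5
    rw [hs, ZMod.natCast_val, ← h5, Units.coe_map]
    rfl
  have key : s * (c / g) ≡ d / g [MOD m] := by
    rw [← ZMod.natCast_eq_natCast_iff]
    push_cast
    rw [hcast]
    have h1 : ((c / g : ℕ) : ZMod m) = ((u₁ : (ZMod m)ˣ) : ZMod m) := by
      rw [hu₁, ZMod.coe_unitOfCoprime]
    have h2 : ((d / g : ℕ) : ZMod m) = ((u₂ : (ZMod m)ˣ) : ZMod m) := by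
      rw [hu₂, ZMod.coe_unitOfCoprime]
    rw [h1, h2, ← Units.val_mul, mul_assoc, inv_mul_cancel, mul_one]
  have key2 : g * (s * (c / g)) ≡ g * (d / g) [MOD g * m] := key.mul_left' g
  have e1 : g * (s * (c / g)) = s * c := by
    rw [mul_comm g, mul_assoc, Nat.div_mul_cancel hgc]
  have e2 : g * (d / g) = d := Nat.mul_div_cancel' hgd
  have e3 : g * m = n := Nat.mul_div_cancel' hgn
  rwa [e1, e2, e3] at key2

/-- Lemma 1 of the paper: for a finitely generated abelian group `G` and an element
`x` of finite order `n`, there is an automorphism of `G` sending `c • x` to `d • x`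
if and only if `gcd(c, n) = gcd(d, n)`. -/
theorem stmt_0 (G : Type*) [AddCommGroup G] [AddGroup.FG G]
    (x : G) (n : ℕ) (hn : 0 < n) (hx : addOrderOf x = n)
    (c d : ℕ) (hc : 0 < c) (hd : 0 < d) :
    (∃ φ : G ≃+ G, φ (c • x) = d • x) ↔ Nat.gcd c n = Nat.gcd d n := by
  constructor
  · rintro ⟨φ, hφ⟩
    have h1 : addOrderOf (φ (c • x)) = addOrderOf (c • x) :=
      addOrderOf_injective φ.toAddMonoidHom φ.injective _
    rw [hφ] at h1
    rw [addOrderOf_nsmul' x hc.ne', addOrderOf_nsmul' x hd.ne', hx] at h1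
    have h2 : Nat.gcd n d = Nat.gcd n c := by
      rw [← Nat.div_div_self (Nat.gcd_dvd_left n d) hn.ne',
        ← Nat.div_div_self (Nat.gcd_dvd_left n c) hn.ne', h1]
    rw [Nat.gcd_comm c n, Nat.gcd_comm d n, h2]
  · intro h
    obtain ⟨k, ι, fι, p, hp, ep, ⟨e⟩⟩ := AddCommGroup.equiv_free_prod_directSum_zmod G
    haveI : ∀ i, NeZero (p i ^ ep i) := fun i => ⟨pow_ne_zero _ (hp i).pos.ne'⟩
    set T := DirectSum ι fun i => ZMod (p i ^ ep i) with hT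
    haveI : Finite T := Finite.of_equiv _ DFinsupp.equivFunOnFintype.symm
    set M := n * AddMonoid.exponent T with hM
    have hM0 : M ≠ 0 := Nat.mul_ne_zero hn.ne' (AddMonoid.exponent_ne_zero_of_finite)
    obtain ⟨s, hsM, hscd⟩ := aux_exists_coprime_mul c d n M hn (dvd_mul_right _ _) hM0 h
    have hinj : Function.Injective (fun a : T => s • a) := by
      intro a b hab
      have h0 : s • (a - b) = 0 := by
        simp only at hab
        rw [smul_sub, hab, sub_self]
      have h1 : addOrderOf (a - b) ∣ s := addOrderOf_dvd_of_nsmul_eq_zero h0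
      have h2 : addOrderOf (a - b) ∣ M :=
        dvd_trans (AddMonoid.addOrder_dvd_exponent _) (dvd_mul_left _ _)
      have h3 : addOrderOf (a - b) ∣ 1 := hsM ▸ Nat.dvd_gcd h1 h2
      have h4 := AddMonoid.addOrderOf_eq_one_iff.mp (Nat.dvd_one.mp h3)
      exact sub_eq_zero.mp h4
    let f : T →+ T := AddMonoidHom.mk' (fun a => s • a) (fun a b => smul_add s a b)
    have hbij : Function.Bijective f := (Finite.injective_iff_bijective).mp hinj
    let ψ : T ≃+ T := AddEquiv.ofBijective f hbij
    have hψ : ∀ a : T, ψ a = s • a := fun a => rfl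
    let Φ : G ≃+ G := e.trans (((AddEquiv.refl (Fin k →₀ ℤ)).prodCongr ψ).trans e.symm)
    refine ⟨Φ, ?_⟩
    have hnx : n • x = 0 := by rw [← hx]; exact addOrderOf_nsmul_eq_zero x
    have hny : n • (e x) = 0 := by rw [← map_nsmul, hnx, map_zero]
    have hfree : (e x).1 = 0 := by
      have h1 : n • (e x).1 = 0 := by
        have h0 := congrArg Prod.fst hny
        rwa [Prod.smul_fst] at h0
      have h2 : (n : ℤ) • (e x).1 = 0 := by rwa [Nat.cast_smul_eq_nsmul]
      rcases smul_eq_zero.mp h2 with h3 | h3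
      · exact absurd (Int.natCast_eq_zero.mp h3) hn.ne'
      · exact h3
    have hnt : n • (e x).2 = 0 := by
      have h0 := congrArg Prod.snd hny
      rwa [Prod.smul_snd] at h0
    have hordt : addOrderOf (e x).2 ∣ n := addOrderOf_dvd_of_nsmul_eq_zero hnt
    have hkey : (s * c) • (e x).2 = d • (e x).2 := by
      rw [nsmul_eq_nsmul_iff_modEq]
      exact hscd.of_dvd hordt
    show e.symm ((((AddEquiv.refl (Fin k →₀ ℤ)).prodCongr ψ)) (e (c • x))) = d • x
    have hc1 : e (c • x) = (0, c • (e x).2) := by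
      rw [map_nsmul, Prod.ext_iff]
      exact ⟨by rw [Prod.smul_fst, hfree, smul_zero], by rw [Prod.smul_snd]⟩
    have hd1 : e (d • x) = (0, d • (e x).2) := by
      rw [map_nsmul, Prod.ext_iff]
      exact ⟨by rw [Prod.smul_fst, hfree, smul_zero], by rw [Prod.smul_snd]⟩
    rw [hc1]
    have hpc : (((AddEquiv.refl (Fin k →₀ ℤ)).prodCongr ψ)) ((0 : Fin k →₀ ℤ), c • (e x).2)
        = (0, (s * c) • (e x).2) := by
      show ((AddEquiv.refl (Fin k →₀ ℤ)) 0, ψ (c • (e x).2)) = (0, (s * c) • (e x).2)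
      rw [AddEquiv.refl_apply, hψ, smul_smul]
    rw [hpc, hkey, ← hd1, AddEquiv.symm_apply_apply]
end

section
/- Let G be a finitely generated abelian group (written additively). If there exist positive integers m, n, an automorphism σ of G, and an element x ∈ G of infinite order such that n·σ(x) = m·x, then n = m. -/
/-!
Since `G` is a finite `ℤ`-module, `σ` is integral over `ℤ` (Cayley–Hamilton). The relation
`n • σ x = m • x` with `x` of infinite order makes `m / n` a root of any monic integer polynomial
killing `σ`, so `m / n` is an algebraic integer, hence an integer: `n ∣ m`. The same argument
for `σ⁻¹`, which satisfies `m • σ⁻¹ x = n • x`, gives `m ∣ n`.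
-/

open Polynomial

/-- A monic `p` with `p(f) = 0` also kills `m / n`: `p.scaleRoots n` annihilates `n • f`, and
evaluating it on the eigenvector `x` of `n • f` gives `(p.scaleRoots n).eval m • x = 0`. -/
theorem isIntegral_div_of_smul_apply_eq {R K M : Type*} [CommRing R] [Field K] [Algebra R K]
    [IsFractionRing R K] [AddCommGroup M] [Module R M] {f : Module.End R M}
    (hf : IsIntegral R f) {x : M} (hx : ∀ r : R, r • x = 0 → r = 0) {m n : R} (hn : n ≠ 0)
    (h : n • f x = m • x) : IsIntegral R (algebraMap R K m / algebraMap R K n) := by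
  obtain ⟨p, hp, hpf⟩ := hf
  have hscale : aeval (n • f) (p.scaleRoots n) = 0 := by
    simpa only [Algebra.smul_def] using scaleRoots_aeval_eq_zero hpf
  have hroot : (p.scaleRoots n).eval m = 0 := by
    refine hx _ ?_
    rw [← Module.End.aeval_apply_of_mem_apply_eq_smul (f := n • f) h, hscale, LinearMap.zero_apply]
  have hn' : algebraMap R K n ≠ 0 := (map_ne_zero_iff _ (IsFractionRing.injective R K)).mpr hn
  refine ⟨p, hp, ?_⟩
  have hmul :
      algebraMap R K n ^ p.natDegree * aeval (algebraMap R K m / algebraMap R K n) p = 0 := by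
    rw [aeval_def, ← scaleRoots_eval₂_mul, mul_div_cancel₀ _ hn', eval₂_at_apply, hroot,
      map_zero]
  exact (mul_eq_zero.mp hmul).resolve_left (pow_ne_zero _ hn')

theorem dvd_of_smul_apply_eq {R M : Type*} [CommRing R] [IsDomain R] [IsIntegrallyClosed R]
    [AddCommGroup M] [Module R M] [Module.Finite R M] (f : Module.End R M) {x : M}
    (hx : ∀ r : R, r • x = 0 → r = 0) {m n : R} (hn : n ≠ 0) (h : n • f x = m • x) : n ∣ m := by
  obtain ⟨y, hy⟩ := IsIntegrallyClosed.isIntegral_iff.mp <|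
    isIntegral_div_of_smul_apply_eq (K := FractionRing R) (Algebra.IsIntegral.isIntegral f) hx hn h
  refine ⟨y, IsFractionRing.injective R (FractionRing R) ?_⟩
  rw [map_mul, hy, mul_div_cancel₀]
  exact (map_ne_zero_iff _ (IsFractionRing.injective R _)).mpr hn

theorem dvd_of_nsmul_apply_eq {G : Type*} [AddCommGroup G] [AddGroup.FG G] (f : G →+ G) {x : G}
    (hx : ¬IsOfFinAddOrder x) {m n : ℕ} (hn : 0 < n) (h : n • f x = m • x) : n ∣ m := by
  have : Module.Finite ℤ G := Module.Finite.iff_addGroup_fg.mpr ‹_›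
  have hx' : ∀ r : ℤ, r • x = 0 → r = 0 := fun r hr ↦
    not_not.mp fun hr0 ↦ hx (isOfFinAddOrder_iff_zsmul_eq_zero.mpr ⟨r, hr0, hr⟩)
  refine Int.natCast_dvd_natCast.mp (dvd_of_smul_apply_eq f.toIntLinearMap hx' (by omega) ?_)
  simpa only [natCast_zsmul, AddMonoidHom.coe_toIntLinearMap] using h

/-- Lemma 3 of the paper: if `G` is a finitely generated abelian group,
`σ` an automorphism of `G`, `x ∈ G` of infinite order, and `m, n` positive
integers with `n • σ x = m • x`, then `n = m`. -/
theorem stmt_4 (G : Type*) [AddCommGroup G] [AddGroup.FG G]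
    (m n : ℕ) (hm : 0 < m) (hn : 0 < n)
    (σ : G ≃+ G) (x : G) (hx : ∀ k : ℕ, 0 < k → k • x ≠ 0)
    (h : n • σ x = m • x) :
    n = m := by
  have hx' : ¬IsOfFinAddOrder x := fun hfin ↦
    let ⟨k, hk, hkx⟩ := isOfFinAddOrder_iff_nsmul_eq_zero.mp hfin
    hx k hk hkx
  have h_symm : m • σ.symm x = n • x := by
    rw [← map_nsmul, ← h, map_nsmul, σ.symm_apply_apply]
  exact Nat.dvd_antisymm (dvd_of_nsmul_apply_eq σ.toAddMonoidHom hx' hn h)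
    (dvd_of_nsmul_apply_eq σ.symm.toAddMonoidHom hx' hm h_symm)
end
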